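/- For a set J = {j_1 < j_2 < … < j_ℓ} ⊂ {1,…,n}, the operator D_J = (D_{j_1}+1)(D_{j_2}+2)⋯(D_{j_ℓ}+ℓ), when restricted to functions symmetric in the variables x_{j_1},…,x_{j_ℓ}, is invariant under any permutation of those variables; consequently D_J maps the space of polynomials symmetric in x_{j_1},…,x_{j_ℓ} to itself. -/

import Mathlib

open MvPolynomial

noncomputable section Jack

/-- The field `ℚ(α)` of rational functions in the Jack parameter `α`. -/
abbrev FF : Type := RatFunc ℚ

/-- The Jack parameter `α`, a transcendental element of `ℚ(α)`. -/
abbrev alpha : FF := RatFunc.X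

/-- Polynomials in `x_1, …, x_n` over `ℚ(α)`. -/
abbrev R (n : ℕ) : Type := MvPolynomial (Fin n) FF

variable {n : ℕ}

/-- The exchange operator `K_{ij}` permuting the variables `x_i` and `x_j`. -/
def Kex (i j : Fin n) (p : R n) : R n := rename (Equiv.swap i j) p

lemma kex_dvd (i j : Fin n) (p : R n) : (X i - X j : R n) ∣ (p - Kex i j p) := by
  unfold Kex
  induction p using MvPolynomial.induction_on with
  | C a => simp
  | add p q hp hq =>
      have h := dvd_add hp hq
      rw [map_add]
      convert h using 1
      ring
  | mul_X p k hp =>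
      rw [map_mul, rename_X]
      have key : p * X k - rename (Equiv.swap i j) p * X (Equiv.swap i j k)
          = (p - rename (Equiv.swap i j) p) * X k
            + rename (Equiv.swap i j) p * (X k - X (Equiv.swap i j k)) := by ring
      rw [key]
      refine dvd_add (hp.mul_right _) ?_
      rcases eq_or_ne k i with rfl | hki
      · rw [Equiv.swap_apply_left]
        exact Dvd.intro_left _ rfl
      rcases eq_or_ne k j with rfl | hkj
      · rw [Equiv.swap_apply_right]
        refine dvd_mul_of_dvd_right ?_ _
        exact dvd_sub_comm.mp dvd_rfl
      · rw [Equiv.swap_apply_of_ne_of_ne hki hkj]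
        simp

/-- The divided difference `(p - K_{ij} p)/(x_i - x_j)`, a polynomial. -/
def dd (i j : Fin n) (p : R n) : R n := (kex_dvd i j p).choose

lemma dd_spec (i j : Fin n) (p : R n) :
    p - Kex i j p = (X i - X j) * dd i j p := (kex_dvd i j p).choose_spec

/-- The Dunkl--Cherednik operator
`D_i = α x_i ∂/∂x_i + Σ_{j ≠ i} (x_i/(x_i - x_j))(1 - K_{ij})`. -/
def D (i : Fin n) (p : R n) : R n :=
  C alpha * (X i * pderiv i p) + ∑ j ∈ Finset.univ.erase i, X i * dd i j p

/-- The shifted operator `D_i + m`. -/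
def Dm (i : Fin n) (m : ℤ) (p : R n) : R n := D i p + m • p

/-- `(D_{j_1}+m)(D_{j_2}+m+1)⋯` along a list of indices, applied to `p`. -/
def DJl : List (Fin n) → ℤ → R n → R n
  | [], _, p => p
  | j :: t, m, p => Dm j m (DJl t (m + 1) p)

/-- `D_J = (D_{j_1}+1)(D_{j_2}+2)⋯(D_{j_ℓ}+ℓ)` for `J = {j_1 < … < j_ℓ}`. -/
def DJ (J : Finset (Fin n)) (p : R n) : R n := DJl (J.sort (· ≤ ·)) 1 p

/-- The creation operator `B_i^+ = Σ_{|J| = i} x_J D_J`. -/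
def Bop (i : ℕ) (p : R n) : R n :=
  ∑ J ∈ Finset.univ.powersetCard i, (∏ k ∈ J, X k) * DJ J p

/-- The canonical image of `ℤ[α]` in `ℚ(α)`. -/
def toFF (q : Polynomial ℤ) : FF :=
  algebraMap (Polynomial ℚ) FF (q.map (Int.castRingHom ℚ))

/-- A scalar in `ℚ(α)` is a polynomial in `α` with integer coefficients. -/
def IntAlpha (c : FF) : Prop := ∃ q : Polynomial ℤ, c = toFF q

/-- `p` is symmetric in the variables indexed by `J`. -/
def SymmIn (J : Finset (Fin n)) (p : R n) : Prop :=
  ∀ i ∈ J, ∀ j ∈ J, Kex i j p = p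

/-- The monomial symmetric polynomial `m_μ`, the sum of `x^ν` over the distinct
permutations `ν` of the exponent vector `μ`. -/
def msymmF (μ : Fin n → ℕ) : R n :=
  ∑ ν ∈ Finset.image
      (fun σ : Equiv.Perm (Fin n) => Finsupp.equivFunOnFinite.symm (μ ∘ σ))
      Finset.univ,
    monomial ν 1

/-- The power-sum product `p_λ = p_{λ_1} p_{λ_2} ⋯` over the nonzero parts of `λ`. -/
def pprod (lam : Fin n → ℕ) : R n :=
  ∏ i ∈ Finset.univ.filter (fun i => lam i ≠ 0), psum (Fin n) FF (lam i)

/-- The number of (nonzero) parts `ℓ(λ)`. -/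
def plen (lam : Fin n → ℕ) : ℕ := (Finset.univ.filter fun i => lam i ≠ 0).card

/-- `z_λ = ∏_i i^{m_i(λ)} m_i(λ)!`. -/
def zed (lam : Fin n → ℕ) : ℕ :=
  ∏ i ∈ Finset.Icc 1 (∑ j, lam j),
    i ^ ((Finset.univ.filter fun j => lam j = i).card)
      * Nat.factorial ((Finset.univ.filter fun j => lam j = i).card)

/-- Dominance order: `μ ≤ λ` (same total degree). -/
def Dominates (μ lam : Fin n → ℕ) : Prop :=
  (∑ i, μ i = ∑ i, lam i) ∧
    ∀ k : Fin n, ∑ i ∈ Finset.univ.filter (· ≤ k), μ i ≤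
      ∑ i ∈ Finset.univ.filter (· ≤ k), lam i

/-- Iterated Rodrigues construction: `rodA lam i = (B_i^+)^{λ_i-λ_{i+1}} ⋯ (B_1^+)^{λ_1-λ_2}·1`,
where `lam k` denotes `λ_k` (1-indexed). -/
def rodA (lam : ℕ → ℕ) : ℕ → R n
  | 0 => 1
  | i + 1 => (Bop (i + 1))^[lam (i + 1) - lam (i + 2)] (rodA lam i)

/-- `(B_n^+)^{λ_n}(B_{n-1}^+)^{λ_{n-1}-λ_n} ⋯ (B_1^+)^{λ_1-λ_2}·1`. -/
def rod (lam : ℕ → ℕ) : R n := rodA lam n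

/-- The field of rational functions in `x_1,…,x_n` over `ℚ(α)`. -/
abbrev KF (n : ℕ) : Type := FractionRing (R n)

/-- The embedding of polynomials into rational functions. -/
def toK : R n →+* KF n := algebraMap (R n) (KF n)

/-- The Sutherland operator
`H(α) = α Σ_j (x_j ∂_j)^2 + Σ_{j<k} ((x_j+x_k)/(x_j-x_k))(x_j ∂_j − x_k ∂_k)`,
applied to a polynomial, with values in the field of rational functions. -/
def Hop (p : R n) : KF n :=
  toK (C alpha * ∑ j, X j * pderiv j (X j * pderiv j p))
    + ∑ jk ∈ (Finset.univ : Finset (Fin n × Fin n)).filter (fun jk => jk.1 < jk.2),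
        (toK (X jk.1 + X jk.2) / toK (X jk.1 - X jk.2))
          * toK (X jk.1 * pderiv jk.1 p - X jk.2 * pderiv jk.2 p)

end Jack

/-!
Write `D_a = x_a T_a` with `T_a` the Dunkl operator, and let `T_a^b` be `T_a` without its
`K_{ab}` term. On a polynomial `q` symmetric in `x_a, x_b`, the operators `T_a^b` and `T_b^a`
commute: after expanding, the only terms that do not commute termwise are `dd a k ∘ dd b k`, and
these commute on such `q`. Since conjugation by `K_{ab}` exchanges `D_a` and `D_b`, this gives
`D_a D_b q - D_b D_a q = D_b q - D_a q`, i.e. `(D_a + m)(D_b + m + 1) q = (D_b + m)(D_a + m + 1) q`.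
In `D_J p` the polynomial on which two adjacent factors act is symmetric in their variables,
because the factors to its right involve neither variable; so the factors may be reordered freely.
Finally `K_{ij}` only relabels the factors of `D_J`, so `D_J p` is again symmetric.
-/

noncomputable section

variable {n : ℕ}

open Finset

theorem pderiv_pderiv_comm {σ K : Type*} [CommRing K] (a b : σ) (p : MvPolynomial σ K) :
    pderiv a (pderiv b p) = pderiv b (pderiv a p) := by
  classical
  have h : ⁅pderiv a, pderiv b⁆ = (0 : Derivation K (MvPolynomial σ K) (MvPolynomial σ K)) :=
    derivation_ext fun i => by
      rw [Derivation.commutator_apply]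
      simp [pderiv_X, Pi.single_apply, apply_ite]
  simpa [Derivation.commutator_apply, sub_eq_zero] using congrArg (fun D => D p) h

lemma rename_Kex (σ : Equiv.Perm (Fin n)) (i j : Fin n) (p : R n) :
    rename σ (Kex i j p) = Kex (σ i) (σ j) (rename σ p) := by
  simp only [Kex, rename_rename, Equiv.swap_apply_apply]
  congr 1
  ext x
  simp

lemma Kex_Kex (i j : Fin n) (p : R n) : Kex i j (Kex i j p) = p := by
  simp [Kex, rename_rename, ← Equiv.coe_trans]

lemma Kex_comm (i j : Fin n) (p : R n) : Kex j i p = Kex i j p := by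
  rw [Kex, Equiv.swap_comm, Kex]

lemma Kex_mul (i j : Fin n) (p q : R n) : Kex i j (p * q) = Kex i j p * Kex i j q :=
  map_mul _ p q

lemma Kex_add (i j : Fin n) (p q : R n) : Kex i j (p + q) = Kex i j p + Kex i j q :=
  map_add _ p q

lemma Kex_X (i j k : Fin n) : Kex i j (X k : R n) = X (Equiv.swap i j k) :=
  rename_X _ k

lemma Kex_X_of_ne {i j k : Fin n} (hki : k ≠ i) (hkj : k ≠ j) : Kex i j (X k : R n) = X k := by
  rw [Kex_X, Equiv.swap_apply_of_ne_of_ne hki hkj]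

lemma X_sub_X_ne_zero {i j : Fin n} (h : i ≠ j) : (X i - X j : R n) ≠ 0 :=
  sub_ne_zero.mpr fun hij => h (X_injective hij)

lemma dd_eq_of_sub_Kex_eq {i j : Fin n} (h : i ≠ j) {p q : R n}
    (hq : p - Kex i j p = (X i - X j) * q) : dd i j p = q :=
  mul_left_cancel₀ (X_sub_X_ne_zero h) (by rw [← dd_spec, hq])

lemma dd_eq_zero_of_Kex_eq {i j : Fin n} (h : i ≠ j) {p : R n} (hp : Kex i j p = p) :
    dd i j p = 0 :=
  dd_eq_of_sub_Kex_eq h (by rw [hp, sub_self, mul_zero])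

lemma dd_add {i j : Fin n} (h : i ≠ j) (p q : R n) : dd i j (p + q) = dd i j p + dd i j q :=
  dd_eq_of_sub_Kex_eq h <| by
    rw [Kex_add]
    linear_combination dd_spec i j p + dd_spec i j q

lemma dd_mul_of_Kex_eq {i j : Fin n} (h : i ≠ j) {c : R n} (hc : Kex i j c = c) (p : R n) :
    dd i j (c * p) = c * dd i j p :=
  dd_eq_of_sub_Kex_eq h <| by
    rw [Kex_mul, hc]
    linear_combination c * dd_spec i j p

def ddLinear {i j : Fin n} (h : i ≠ j) : R n →ₗ[FF] R n where
  toFun := dd i j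
  map_add' := dd_add h
  map_smul' c p := by
    simpa [smul_eq_C_mul] using dd_mul_of_Kex_eq h (by simp [Kex]) p

lemma dd_sub {i j : Fin n} (h : i ≠ j) (p q : R n) : dd i j (p - q) = dd i j p - dd i j q :=
  map_sub (ddLinear h) p q

lemma dd_sum {i j : Fin n} (h : i ≠ j) {ι : Type*} (s : Finset ι) (f : ι → R n) :
    dd i j (∑ x ∈ s, f x) = ∑ x ∈ s, dd i j (f x) :=
  map_sum (ddLinear h) f s

lemma dd_C_mul {i j : Fin n} (h : i ≠ j) (c : FF) (p : R n) : dd i j (C c * p) = C c * dd i j p :=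
  dd_mul_of_Kex_eq h (by simp [Kex]) p

lemma rename_dd (σ : Equiv.Perm (Fin n)) {i j : Fin n} (h : i ≠ j) (p : R n) :
    rename σ (dd i j p) = dd (σ i) (σ j) (rename σ p) := by
  refine (dd_eq_of_sub_Kex_eq (σ.injective.ne h) ?_).symm
  rw [← rename_Kex, ← map_sub, dd_spec i j p, map_mul, map_sub, rename_X, rename_X]

lemma Kex_dd_self {i j : Fin n} (h : i ≠ j) (p : R n) : Kex i j (dd i j p) = dd i j p := by
  rw [Kex, rename_dd _ h, Equiv.swap_apply_left, Equiv.swap_apply_right, ← Kex]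
  refine dd_eq_of_sub_Kex_eq h.symm ?_
  rw [Kex_comm i j, Kex_Kex]
  linear_combination -dd_spec i j p

lemma pderiv_dd {i j k : Fin n} (h : i ≠ j) (hki : k ≠ i) (hkj : k ≠ j) (p : R n) :
    pderiv k (dd i j p) = dd i j (pderiv k p) := by
  refine (dd_eq_of_sub_Kex_eq h ?_).symm
  have hK : Kex i j (pderiv k p) = pderiv k (Kex i j p) := by
    rw [Kex, ← pderiv_rename (Equiv.injective _), Equiv.swap_apply_of_ne_of_ne hki hkj, Kex]
  rw [hK, ← map_sub, dd_spec i j p, pderiv_mul, map_sub, pderiv_X_of_ne hki.symm,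
    pderiv_X_of_ne hkj.symm]
  ring

lemma dd_dd_comm_of_disjoint {i j k l : Fin n} (hij : i ≠ j) (hkl : k ≠ l) (hik : i ≠ k)
    (hil : i ≠ l) (hjk : j ≠ k) (hjl : j ≠ l) (p : R n) :
    dd i j (dd k l p) = dd k l (dd i j p) := by
  refine dd_eq_of_sub_Kex_eq hij ?_
  have hK : Kex i j (dd k l p) = dd k l (Kex i j p) := by
    rw [Kex, rename_dd _ hkl, Equiv.swap_apply_of_ne_of_ne hik.symm hjk.symm,
      Equiv.swap_apply_of_ne_of_ne hil.symm hjl.symm, Kex]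
  have hX : Kex k l (X i - X j : R n) = X i - X j := by
    rw [Kex, map_sub, ← Kex, ← Kex, Kex_X_of_ne hik hil, Kex_X_of_ne hjk hjl]
  rw [hK, ← dd_sub hkl, dd_spec i j p, dd_mul_of_Kex_eq hkl hX]

lemma dd_dd_comm_of_Kex_eq {a b k : Fin n} (hab : a ≠ b) (hak : a ≠ k) (hbk : b ≠ k) {q : R n}
    (hq : Kex a b q = q) : dd a k (dd b k q) = dd b k (dd a k q) := by
  set q₁ := Kex a k q
  set q₂ := Kex b k q
  have hq₁ : Kex a b q₁ = q₂ := by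
    rw [Kex, rename_Kex, Equiv.swap_apply_left, Equiv.swap_apply_of_ne_of_ne hak.symm hbk.symm,
      ← Kex, hq]
  have hq₂ : Kex a b q₂ = q₁ := by rw [← hq₁, Kex_Kex]
  have hd₁ : Kex a k (dd b k q) = dd b a q₁ := by
    rw [Kex, rename_dd _ hbk, Equiv.swap_apply_of_ne_of_ne hab.symm hbk, Equiv.swap_apply_right]
    rfl
  have hd₂ : Kex b k (dd a k q) = dd a b q₂ := by
    rw [Kex, rename_dd _ hak, Equiv.swap_apply_of_ne_of_ne hab hak, Equiv.swap_apply_right]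
    rfl
  have s₁ := dd_spec b k q
  have s₂ := dd_spec a k (dd b k q)
  have s₃ := dd_spec b a q₁
  have s₄ := dd_spec a k q
  have s₅ := dd_spec b k (dd a k q)
  have s₆ := dd_spec a b q₂
  rw [hd₁] at s₂
  rw [hd₂] at s₅
  rw [Kex_comm, hq₁] at s₃
  rw [hq₂] at s₆
  -- Times `(x_a - x_k)(x_b - x_k)(x_b - x_a)`, both sides become combinations of `q`, `K_{ak} q`
  -- and `K_{bk} q`; they agree because `K_{ab}` exchanges the last two.
  refine mul_left_cancel₀ (mul_ne_zero (mul_ne_zero (X_sub_X_ne_zero hak) (X_sub_X_ne_zero hbk))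
    (X_sub_X_ne_zero hab.symm)) ?_
  linear_combination (-(X b - X a : R n)) * s₁ - (X b - X k) * (X b - X a) * s₂
    + (X b - X k) * s₃ + (X b - X a) * s₄ + (X a - X k) * (X b - X a) * s₅ + (X a - X k) * s₆

lemma ne_and_ne_of_mem_univ_sdiff_pair {α : Type*} [Fintype α] [DecidableEq α] {a b k : α}
    (hk : k ∈ univ \ {a, b}) : k ≠ a ∧ k ≠ b := by
  simpa [not_or] using hk

/-- The Dunkl operator `T_a = α ∂_a + Σ_{k ≠ a} (1 - K_{ak})/(x_a - x_k)` without its `k = b` term,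
so that `D_a = x_a T_a`. -/
def dunklExcept (a b : Fin n) (p : R n) : R n :=
  C alpha * pderiv a p + ∑ k ∈ univ \ {a, b}, dd a k p

lemma D_eq_X_mul_dunklExcept_self (a : Fin n) (p : R n) : D a p = X a * dunklExcept a a p := by
  rw [D, dunklExcept, pair_eq_singleton, sdiff_singleton_eq_erase, mul_add, mul_sum]
  ring

lemma D_eq_X_mul_dunklExcept {a b : Fin n} (hab : a ≠ b) (p : R n) :
    D a p = X a * (dunklExcept a b p + dd a b p) := by
  have hb : b ∈ univ \ {a} := by simpa using hab.symm
  rw [D_eq_X_mul_dunklExcept_self, dunklExcept, dunklExcept, pair_eq_singleton, pair_comm,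
    sdiff_insert, ← sum_erase_add _ _ hb]
  ring

lemma rename_dunklExcept (σ : Equiv.Perm (Fin n)) (a b : Fin n) (p : R n) :
    rename σ (dunklExcept a b p) = dunklExcept (σ a) (σ b) (rename σ p) := by
  rw [dunklExcept, dunklExcept, map_add, map_mul, rename_C, ← pderiv_rename σ.injective, map_sum]
  congr 1
  refine sum_equiv σ (fun k => by simp [σ.injective.eq_iff]) fun k hk => ?_
  exact rename_dd σ (ne_and_ne_of_mem_univ_sdiff_pair hk).1.symm p

lemma rename_D (σ : Equiv.Perm (Fin n)) (i : Fin n) (p : R n) :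
    rename σ (D i p) = D (σ i) (rename σ p) := by
  rw [D_eq_X_mul_dunklExcept_self, map_mul, rename_X, rename_dunklExcept,
    D_eq_X_mul_dunklExcept_self]

lemma dunklExcept_X_mul {a b : Fin n} (hab : a ≠ b) (p : R n) :
    dunklExcept a b (X b * p) = X b * dunklExcept a b p := by
  rw [dunklExcept, dunklExcept, pderiv_mul, pderiv_X_of_ne hab.symm, zero_mul, zero_add, mul_add,
    mul_sum]
  congr 1
  · ring
  · refine sum_congr rfl fun k hk => ?_
    have hk' := ne_and_ne_of_mem_univ_sdiff_pair hk
    exact dd_mul_of_Kex_eq hk'.1.symm (Kex_X_of_ne hab.symm hk'.2.symm) p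

lemma dunklExcept_dunklExcept {a b : Fin n} (hab : a ≠ b) (p : R n) :
    dunklExcept a b (dunklExcept b a p) =
      C alpha * C alpha * pderiv a (pderiv b p)
        + C alpha * (∑ k ∈ univ \ {a, b}, dd a k (pderiv b p)
          + ∑ k ∈ univ \ {a, b}, dd b k (pderiv a p))
        + ∑ k ∈ univ \ {a, b}, ∑ l ∈ univ \ {a, b}, dd a k (dd b l p) := by
  have hpderiv : pderiv a (dunklExcept b a p) =
      C alpha * pderiv a (pderiv b p) + ∑ l ∈ univ \ {a, b}, dd b l (pderiv a p) := by
    rw [dunklExcept, pair_comm, map_add, pderiv_C_mul, map_sum]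
    congr 1
    refine sum_congr rfl fun l hl => ?_
    have hl' := ne_and_ne_of_mem_univ_sdiff_pair hl
    exact pderiv_dd hl'.2.symm hab hl'.1.symm p
  have hdd : ∀ k ∈ univ \ {a, b}, dd a k (dunklExcept b a p) =
      C alpha * dd a k (pderiv b p) + ∑ l ∈ univ \ {a, b}, dd a k (dd b l p) := by
    intro k hk
    have hak := (ne_and_ne_of_mem_univ_sdiff_pair hk).1.symm
    rw [dunklExcept, pair_comm, dd_add hak, dd_C_mul hak, dd_sum hak]
  rw [dunklExcept, hpderiv, sum_congr rfl hdd, sum_add_distrib, ← mul_sum]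
  ring

lemma dunklExcept_comm {a b : Fin n} (hab : a ≠ b) {q : R n} (hq : Kex a b q = q) :
    dunklExcept a b (dunklExcept b a q) = dunklExcept b a (dunklExcept a b q) := by
  have hdd : ∀ k ∈ univ \ {a, b}, ∀ l ∈ univ \ {a, b}, dd a k (dd b l q) = dd b l (dd a k q) := by
    intro k hk l hl
    obtain ⟨hka, hkb⟩ := ne_and_ne_of_mem_univ_sdiff_pair hk
    obtain ⟨hla, hlb⟩ := ne_and_ne_of_mem_univ_sdiff_pair hl
    rcases eq_or_ne k l with rfl | hkl
    · exact dd_dd_comm_of_Kex_eq hab hka.symm hkb.symm hq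
    · exact dd_dd_comm_of_disjoint hka.symm hlb.symm hab hla.symm hkb hkl q
  rw [dunklExcept_dunklExcept hab, dunklExcept_dunklExcept hab.symm, pair_comm b a,
    pderiv_pderiv_comm b a, sum_comm (s := univ \ {a, b}) (f := fun k l => dd b k (dd a l q)),
    sum_congr rfl fun k hk => sum_congr rfl (hdd k hk)]
  ring

lemma D_add (i : Fin n) (p q : R n) : D i (p + q) = D i p + D i q := by
  have h : ∀ j ∈ univ.erase i, X i * dd i j (p + q) = X i * dd i j p + X i * dd i j q :=
    fun j hj => by rw [dd_add (ne_of_mem_erase hj).symm, mul_add]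
  rw [D, D, D, map_add, sum_congr rfl h, sum_add_distrib]
  ring

lemma D_C_mul (i : Fin n) (c : FF) (p : R n) : D i (C c * p) = C c * D i p := by
  have h : ∀ j ∈ univ.erase i, X i * dd i j (C c * p) = C c * (X i * dd i j p) :=
    fun j hj => by rw [dd_C_mul (ne_of_mem_erase hj).symm, mul_left_comm]
  rw [D, D, pderiv_C_mul, sum_congr rfl h, ← mul_sum]
  ring

lemma D_zsmul (i : Fin n) (m : ℤ) (p : R n) : D i (m • p) = m • D i p := by
  simpa only [zsmul_eq_mul, map_intCast] using D_C_mul i m p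

lemma D_D_add_D {a b : Fin n} (hab : a ≠ b) {q : R n} (hq : Kex a b q = q) :
    D a (D b q) + D a q = D b (D a q) + D b q := by
  set u := D b q with hu
  set W := dunklExcept a b (dunklExcept b a q) with hW
  have hKu : Kex a b u = D a q := by rw [hu, Kex, rename_D, Equiv.swap_apply_right, ← Kex, hq]
  have hKDu : Kex a b (D a u) = D b (D a q) := by
    rw [Kex, rename_D, Equiv.swap_apply_left, ← Kex, hKu]
  have hKW : Kex a b W = W := by
    rw [hW, Kex, rename_dunklExcept, rename_dunklExcept, Equiv.swap_apply_left,
      Equiv.swap_apply_right, ← Kex, hq, dunklExcept_comm hab hq]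
  have hDu : D a u = X a * (X b * W + dd a b u) := by
    have hWu : dunklExcept a b u = X b * W := by
      rw [hu, D_eq_X_mul_dunklExcept hab.symm, dd_eq_zero_of_Kex_eq hab.symm (by rwa [Kex_comm]),
        add_zero, dunklExcept_X_mul hab]
    rw [D_eq_X_mul_dunklExcept hab u, hWu]
  -- `K_{ab}` fixes `x_a x_b W` and `dd a b u`, so `D_a u - K_{ab} (D_a u) = (x_a - x_b) dd a b u`.
  rw [← hKDu, hDu, Kex_mul, Kex_add, Kex_mul, hKW, Kex_dd_self hab, Kex_X, Kex_X,
    Equiv.swap_apply_left, Equiv.swap_apply_right, ← hKu]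
  linear_combination -dd_spec a b u

lemma Dm_Dm_comm {a b : Fin n} (hab : a ≠ b) {q : R n} (hq : Kex a b q = q) (m : ℤ) :
    Dm a m (Dm b (m + 1) q) = Dm b m (Dm a (m + 1) q) := by
  simp only [Dm, D_add, D_zsmul]
  push_cast [zsmul_eq_mul]
  linear_combination D_D_add_D hab hq

lemma rename_DJl (σ : Equiv.Perm (Fin n)) (l : List (Fin n)) (m : ℤ) (p : R n) :
    rename σ (DJl l m p) = DJl (l.map σ) m (rename σ p) := by
  induction l generalizing m with
  | nil => rfl
  | cons j t ih => simp only [DJl, Dm, List.map_cons, map_add, map_zsmul, rename_D, ih]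

lemma Kex_DJl_of_not_mem {x y : Fin n} {l : List (Fin n)} (hx : x ∉ l) (hy : y ∉ l) {p : R n}
    (hp : Kex x y p = p) (m : ℤ) : Kex x y (DJl l m p) = DJl l m p := by
  have hl : l.map (Equiv.swap x y) = l := by
    refine (List.map_congr_left fun z hz => ?_).trans (List.map_id l)
    exact Equiv.swap_apply_of_ne_of_ne (ne_of_mem_of_not_mem hz hx) (ne_of_mem_of_not_mem hz hy)
  rw [Kex, rename_DJl, hl, ← Kex, hp]

lemma DJl_eq_of_perm {J : Finset (Fin n)} {p : R n} (hp : SymmIn J p) {l₁ l₂ : List (Fin n)}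
    (h : l₁.Perm l₂) (hJ : ∀ x ∈ l₁, x ∈ J) (hnd : l₁.Nodup) (m : ℤ) :
    DJl l₁ m p = DJl l₂ m p := by
  induction h generalizing m with
  | nil => rfl
  | cons x _ ih =>
    rw [DJl, DJl, ih (fun y hy => hJ y (List.mem_cons_of_mem x hy)) (List.nodup_cons.mp hnd).2]
  | swap x y t =>
    have hq := hp y (hJ y (by simp)) x (hJ x (by simp))
    simp only [List.nodup_cons, List.mem_cons, not_or] at hnd
    obtain ⟨⟨hyx, hyt⟩, hxt, -⟩ := hnd
    exact Dm_Dm_comm hyx (Kex_DJl_of_not_mem hyt hxt hq _) m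
  | trans h₁₂ _ ih₁₂ ih₂₃ =>
    rw [ih₁₂ hJ hnd, ih₂₃ (fun x hx => hJ x (h₁₂.mem_iff.mpr hx)) (h₁₂.nodup_iff.mp hnd)]

lemma Equiv.swap_apply_mem_iff {α : Type*} [DecidableEq α] {s : Finset α} {i j x : α}
    (hi : i ∈ s) (hj : j ∈ s) : Equiv.swap i j x ∈ s ↔ x ∈ s := by
  rw [Equiv.swap_apply_def]
  split_ifs <;> simp_all

lemma perm_map_swap_sort {α : Type*} [LinearOrder α] {s : Finset α} {i j : α} (hi : i ∈ s) (hj : j ∈ s) :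
    ((s.sort (· ≤ ·)).map (Equiv.swap i j)).Perm (s.sort (· ≤ ·)) :=
  List.perm_of_nodup_nodup_toFinset_eq ((sort_nodup _ _).map (Equiv.injective _)) (sort_nodup _ _)
    (by ext x; simp [Equiv.swap_apply_eq_iff, Equiv.swap_apply_mem_iff hi hj])

end

/-- `D_J` restricted to functions symmetric in the variables indexed by `J`
is invariant under permutations of those variables, and preserves such symmetry. -/
theorem DJ_perm_invariant (n : ℕ) (J : Finset (Fin n)) (p : R n) (hsym : SymmIn J p) :
    (∀ l : List (Fin n), l.Perm (J.sort (· ≤ ·)) → DJl l 1 p = DJ J p) ∧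
    SymmIn J (DJ J p) := by
  have hperm (l : List (Fin n)) (hl : l.Perm (J.sort (· ≤ ·))) : DJl l 1 p = DJ J p :=
    DJl_eq_of_perm hsym hl (fun x hx => (Finset.mem_sort _).mp (hl.mem_iff.mp hx))
      (hl.nodup_iff.mpr (Finset.sort_nodup _ _)) 1
  refine ⟨hperm, fun i hi j hj => ?_⟩
  rw [DJ, Kex, rename_DJl, ← Kex, hsym i hi j hj]
  exact hperm _ (perm_map_swap_sort hi hj)
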